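/- Fix p₁ > 0, p₂ > 0 and σ > 0. The function g : (0,∞) → ℝ defined by g(d) = p₁·Q(d/(√2 σ) + (σ/(√2 d))·ln(p₁/p₂)) + p₂·Q(d/(√2 σ) − (σ/(√2 d))·ln(p₁/p₂)) is non-increasing on (0,∞). -/

import Mathlib

/-!
Substitute `a = d / (√2 σ)` and `b = ln(p₁/p₂) / (2a)`, so that `g = p₁ Q(a + b) + p₂ Q(a - b)`.
Because `ab` is constant, `(a + b)² - (a - b)² = 2 ln(p₁/p₂)`, i.e. `p₁ φ(a + b) = p₂ φ(a - b)` for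
the standard normal density `φ`. Hence the terms of `g'(a)` coming from `b'` cancel, leaving
`g'(a) = -2 p₁ φ(a + b) ≤ 0`.
-/

noncomputable def Qfun (x : ℝ) : ℝ :=
  (Real.sqrt (2 * Real.pi))⁻¹ * ∫ t in Set.Ioi x, Real.exp (-t ^ 2 / 2)

open MeasureTheory ProbabilityTheory Real Set

theorem hasDerivAt_integral_Ioi {f : ℝ → ℝ} {x : ℝ} (hf : Integrable f) (hfx : ContinuousAt f x) :
    HasDerivAt (fun y => ∫ t in Ioi y, f t) (-f x) x := by
  have hsplit : (fun y => ∫ t in Ioi y, f t) =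
      fun y => (∫ t in Ioi 0, f t) - ∫ t in (0 : ℝ)..y, f t := by
    ext y
    rw [← intervalIntegral.integral_Ioi_sub_Ioi' hf.integrableOn hf.integrableOn, sub_sub_cancel]
  rw [hsplit, ← zero_sub]
  exact (hasDerivAt_const x _).sub <| intervalIntegral.integral_hasDerivAt_right
    hf.intervalIntegrable hf.aestronglyMeasurable.stronglyMeasurableAtFilter hfx

lemma gaussianPDFReal_zero_one (x : ℝ) :
    gaussianPDFReal 0 1 x = (√(2 * π))⁻¹ * exp (-x ^ 2 / 2) := by
  simp [gaussianPDFReal]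

theorem hasDerivAt_Qfun (x : ℝ) : HasDerivAt Qfun (-gaussianPDFReal 0 1 x) x := by
  have hint : Integrable fun t : ℝ => exp (-t ^ 2 / 2) := by
    simpa [div_eq_inv_mul, neg_mul] using integrable_exp_neg_mul_sq (by norm_num : (0 : ℝ) < 2⁻¹)
  have hcont : Continuous fun t : ℝ => exp (-t ^ 2 / 2) := by fun_prop
  rw [gaussianPDFReal_zero_one, ← mul_neg]
  exact (hasDerivAt_integral_Ioi hint hcont.continuousAt).const_mul _

theorem mul_gaussianPDFReal_add_eq_mul_gaussianPDFReal_sub {p₁ p₂ a b : ℝ} (hp₁ : 0 < p₁)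
    (hp₂ : 0 < p₂) (hab : 2 * (a * b) = log (p₁ / p₂)) :
    p₁ * gaussianPDFReal 0 1 (a + b) = p₂ * gaussianPDFReal 0 1 (a - b) := by
  have hexp : exp (-(a + b) ^ 2 / 2) = exp (-(a - b) ^ 2 / 2) * (p₂ / p₁) := by
    rw [← inv_div p₁ p₂, ← exp_log (div_pos hp₁ hp₂), ← exp_neg, ← exp_add, ← hab]
    ring_nf
  rw [gaussianPDFReal_zero_one, gaussianPDFReal_zero_one, hexp]
  field_simp

/-- The weight `g` of the statement in the normalized distance `a = d / (√2 σ)`. -/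
noncomputable def normalizedBayesError (p₁ p₂ a : ℝ) : ℝ :=
  p₁ * Qfun (a + log (p₁ / p₂) / (2 * a)) + p₂ * Qfun (a - log (p₁ / p₂) / (2 * a))

theorem hasDerivAt_normalizedBayesError {p₁ p₂ a : ℝ} (hp₁ : 0 < p₁) (hp₂ : 0 < p₂) (ha : a ≠ 0) :
    HasDerivAt (normalizedBayesError p₁ p₂)
      (-(2 * (p₁ * gaussianPDFReal 0 1 (a + log (p₁ / p₂) / (2 * a))))) a := by
  set L := log (p₁ / p₂) with hL
  have hb : HasDerivAt (fun x => L / (2 * x)) (L / 2 * -(a ^ 2)⁻¹) a := by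
    have hfun : (fun x => L / (2 * x)) = fun x => L / 2 * x⁻¹ := by
      funext x
      rw [← div_eq_mul_inv, div_div]
    rw [hfun]
    exact (hasDerivAt_inv ha).const_mul (L / 2)
  have hbal := mul_gaussianPDFReal_add_eq_mul_gaussianPDFReal_sub (a := a) (b := L / (2 * a))
    hp₁ hp₂ (by rw [hL]; field_simp)
  have hder := (((hasDerivAt_Qfun _).comp a ((hasDerivAt_id a).add hb)).const_mul p₁).add
    (((hasDerivAt_Qfun _).comp a ((hasDerivAt_id a).sub hb)).const_mul p₂)
  simp only [Pi.add_apply, Pi.sub_apply, id] at hder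
  refine hder.congr_deriv ?_
  linear_combination (1 - L / 2 * -(a ^ 2)⁻¹) * hbal

theorem antitoneOn_normalizedBayesError {p₁ p₂ : ℝ} (hp₁ : 0 < p₁) (hp₂ : 0 < p₂) :
    AntitoneOn (normalizedBayesError p₁ p₂) (Ioi 0) := by
  have hder : ∀ a ∈ Ioi (0 : ℝ), HasDerivAt (normalizedBayesError p₁ p₂)
      (-(2 * (p₁ * gaussianPDFReal 0 1 (a + log (p₁ / p₂) / (2 * a))))) a :=
    fun a ha => hasDerivAt_normalizedBayesError hp₁ hp₂ (ne_of_gt ha)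
  refine antitoneOn_of_hasDerivWithinAt_nonpos (f' := fun a =>
      -(2 * (p₁ * gaussianPDFReal 0 1 (a + log (p₁ / p₂) / (2 * a))))) (convex_Ioi 0)
    (fun a ha => (hder a ha).continuousAt.continuousWithinAt) ?_ ?_ <;> rw [interior_Ioi]
  · exact fun a ha => (hder a ha).hasDerivWithinAt
  · exact fun a _ => neg_nonpos.2 <|
      mul_nonneg zero_le_two (mul_nonneg hp₁.le (gaussianPDFReal_nonneg 0 1 _))

/-- The minimum Bayes detection-error weight
`g(d) = p₁ Q(d/(√2σ) + (σ/(√2 d)) ln(p₁/p₂)) + p₂ Q(d/(√2σ) − (σ/(√2 d)) ln(p₁/p₂))`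
is non-increasing in the distance `d` on `(0,∞)`. -/
theorem stmt3 (p₁ p₂ σ : ℝ) (hp₁ : 0 < p₁) (hp₂ : 0 < p₂) (hσ : 0 < σ) :
    AntitoneOn (fun d : ℝ =>
      p₁ * Qfun (d / (Real.sqrt 2 * σ) + σ / (Real.sqrt 2 * d) * Real.log (p₁ / p₂)) +
        p₂ * Qfun (d / (Real.sqrt 2 * σ) - σ / (Real.sqrt 2 * d) * Real.log (p₁ / p₂)))
      (Set.Ioi (0 : ℝ)) := by
  have hscale : 0 < √2 * σ := by positivity
  have hlog : ∀ d, σ / (√2 * d) * log (p₁ / p₂) = log (p₁ / p₂) / (2 * (d / (√2 * σ))) := by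
    intro d
    rcases eq_or_ne d 0 with rfl | hd
    · simp
    · field_simp
      rw [Real.sq_sqrt zero_le_two]
      ring
  intro x hx y hy hxy
  simp only [hlog]
  exact antitoneOn_normalizedBayesError hp₁ hp₂ (div_pos hx hscale) (div_pos hy hscale)
    (div_le_div_of_nonneg_right hxy hscale.le)
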